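/- Let k be a field, W a finite-dimensional k-vector space, q ∈ k a unit, F ∈ GL(W) and N ∈ End(W) with N ∘ F = q·(F ∘ N). Form the complex C(W, F, N, q) : W → W⊕W → W with maps w ↦ ((F−1)w, Nw) and (a,b) ↦ Na + (1 − qF)b. Let W* be the dual space, Fᵗ and Nᵗ the transpose maps, and set F' = q·Fᵗ, N' = Nᵗ; then N' ∘ F' = q⁻¹·(F' ∘ N'), so the complex C(W*, F', N', q⁻¹) is defined. Then for every i ∈ {0,1,2}, dim Hⁱ(C(W, F, N, q)) = dim H^{2−i}(C(W*, q·Fᵗ, Nᵗ, q⁻¹)). -/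

import Mathlib

/-!
Under the identification `W* × W* ≃ (W × W)*`, `(φ, ψ) ↦ ((a, b) ↦ φ b - ψ a)`, the transpose of
the first differential of `C(W, F, N, q)` is the second differential of `C(W*, q·Fᵗ, Nᵗ, q⁻¹)`, and
the transpose of the second is minus the first. A map and its transpose have the same rank, so
the ranks `r₀, r₁` of the two differentials are exchanged between the complexes, and
`dim H⁰ = n - r₀`, `dim H¹ = 2n - r₀ - r₁`, `dim H² = n - r₁` with `n = dim W`, on both sides.
-/

open Module

/-- First differential `w ↦ ((F - 1)w, Nw)` of the Weil–Deligne complex. -/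
noncomputable def wdD0 {k W : Type*} [Field k] [AddCommGroup W] [Module k W]
    (F N : W →ₗ[k] W) : W →ₗ[k] W × W :=
  (F - LinearMap.id).prod N

/-- Second differential `(a, b) ↦ Na + (1 - cF)b` of the Weil–Deligne complex. -/
noncomputable def wdD1 {k W : Type*} [Field k] [AddCommGroup W] [Module k W]
    (c : k) (F N : W →ₗ[k] W) : W × W →ₗ[k] W :=
  N ∘ₗ LinearMap.fst k W W + (LinearMap.id - c • F) ∘ₗ LinearMap.snd k W W

/-- `H⁰` of the Weil–Deligne complex `C(W, F, N, c)`. -/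
noncomputable abbrev wdH0 {k W : Type*} [Field k] [AddCommGroup W] [Module k W]
    (c : k) (F N : W →ₗ[k] W) : Submodule k W :=
  LinearMap.ker (wdD0 F N)

/-- `H¹ = ker d₁ / im d₀` of the Weil–Deligne complex `C(W, F, N, c)`. -/
noncomputable abbrev wdH1 {k W : Type*} [Field k] [AddCommGroup W] [Module k W]
    (c : k) (F N : W →ₗ[k] W) :=
  (LinearMap.ker (wdD1 c F N)) ⧸
    (Submodule.comap (LinearMap.ker (wdD1 c F N)).subtype
      (LinearMap.range (wdD0 F N)))

/-- `H² = W / im d₁` of the Weil–Deligne complex `C(W, F, N, c)`. -/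
noncomputable abbrev wdH2 {k W : Type*} [Field k] [AddCommGroup W] [Module k W]
    (c : k) (F N : W →ₗ[k] W) :=
  W ⧸ LinearMap.range (wdD1 c F N)

theorem Submodule.finrank_quotient_comap_subtype_add_finrank {k V : Type*} [Field k]
    [AddCommGroup V] [Module k V] [FiniteDimensional k V] {p q : Submodule k V} (h : q ≤ p) :
    finrank k (p ⧸ q.comap p.subtype) + finrank k q = finrank k p := by
  rw [← (Submodule.comapSubtypeEquivOfLe h).finrank_eq]
  exact Submodule.finrank_quotient_add_finrank _

namespace WeilDeligne

variable {k W : Type*} [Field k] [AddCommGroup W] [Module k W]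

theorem wdD1_comp_wdD0 {c : k} {F N : W →ₗ[k] W} (h : N ∘ₗ F = c • (F ∘ₗ N)) :
    wdD1 c F N ∘ₗ wdD0 F N = 0 := by
  ext w
  have hw : N (F w) = c • F (N w) := LinearMap.congr_fun h w
  simp [wdD1, wdD0, hw]

theorem dualMap_comp_smul_dualMap {q : k} (hq : q ≠ 0) {F N : W →ₗ[k] W}
    (h : N ∘ₗ F = q • (F ∘ₗ N)) :
    N.dualMap ∘ₗ (q • F.dualMap) = q⁻¹ • ((q • F.dualMap) ∘ₗ N.dualMap) := by
  ext φ w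
  have hw : N (F w) = q • F (N w) := LinearMap.congr_fun h w
  simp [smul_smul, inv_mul_cancel₀ hq, hw]

noncomputable def dualProdSkewEquiv : (Dual k W × Dual k W) ≃ₗ[k] Dual k (W × W) :=
  ((LinearEquiv.prodComm k _ _).trans
    ((LinearEquiv.neg k).prodCongr (LinearEquiv.refl k _))).trans
    (Module.dualProdDualEquivDual k W W)

@[simp]
theorem dualProdSkewEquiv_apply (φ ψ : Dual k W) (a b : W) :
    dualProdSkewEquiv (φ, ψ) (a, b) = φ b - ψ a := by
  simp [dualProdSkewEquiv, Module.dualProdDualEquivDual, sub_eq_neg_add]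

theorem dualMap_wdD0_comp_dualProdSkewEquiv {q : k} (hq : q ≠ 0) (F N : W →ₗ[k] W) :
    (wdD0 F N).dualMap ∘ₗ (dualProdSkewEquiv (k := k) (W := W) : _ →ₗ[k] _)
      = wdD1 q⁻¹ (q • F.dualMap) N.dualMap := by
  ext φ w <;> simp [wdD0, wdD1, smul_smul, inv_mul_cancel₀ hq]

theorem dualMap_wdD1 (q : k) (F N : W →ₗ[k] W) :
    (wdD1 q F N).dualMap
      = -((dualProdSkewEquiv (k := k) (W := W) : _ →ₗ[k] _) ∘ₗ
          wdD0 (q • F.dualMap) N.dualMap) := by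
  ext φ w <;> simp [wdD0, wdD1]

theorem finrank_range_wdD1_dual {q : k} (hq : q ≠ 0) (F N : W →ₗ[k] W) :
    finrank k (LinearMap.range (wdD1 q⁻¹ (q • F.dualMap) N.dualMap))
      = finrank k (LinearMap.range (wdD0 F N)) := by
  rw [← dualMap_wdD0_comp_dualProdSkewEquiv hq, LinearMap.range_comp, LinearEquiv.range,
    Submodule.map_top, LinearMap.finrank_range_dualMap_eq_finrank_range]

theorem finrank_range_wdD0_dual (q : k) (F N : W →ₗ[k] W) :
    finrank k (LinearMap.range (wdD0 (q • F.dualMap) N.dualMap))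
      = finrank k (LinearMap.range (wdD1 q F N)) := by
  rw [← LinearMap.finrank_range_dualMap_eq_finrank_range (wdD1 q F N), dualMap_wdD1,
    LinearMap.range_neg, LinearMap.range_comp, LinearEquiv.finrank_map_eq]

variable [FiniteDimensional k W]

theorem finrank_wdH0_add_finrank_range (c : k) (F N : W →ₗ[k] W) :
    finrank k (wdH0 c F N) + finrank k (LinearMap.range (wdD0 F N)) = finrank k W := by
  rw [add_comm, LinearMap.finrank_range_add_finrank_ker]

theorem finrank_wdH2_add_finrank_range (c : k) (F N : W →ₗ[k] W) :
    finrank k (wdH2 c F N) + finrank k (LinearMap.range (wdD1 c F N)) = finrank k W :=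
  Submodule.finrank_quotient_add_finrank _

theorem finrank_wdH1_add_finrank_range_add_finrank_range {c : k} {F N : W →ₗ[k] W}
    (h : N ∘ₗ F = c • (F ∘ₗ N)) :
    finrank k (wdH1 c F N) + finrank k (LinearMap.range (wdD0 F N))
      + finrank k (LinearMap.range (wdD1 c F N)) = 2 * finrank k W := by
  have hle : LinearMap.range (wdD0 F N) ≤ LinearMap.ker (wdD1 c F N) :=
    LinearMap.range_le_ker_iff.mpr (wdD1_comp_wdD0 h)
  rw [Submodule.finrank_quotient_comap_subtype_add_finrank hle, add_comm,
    LinearMap.finrank_range_add_finrank_ker, finrank_prod, two_mul]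

end WeilDeligne

open WeilDeligne in
/-- Local Tate duality for Weil–Deligne cohomology: for a finite-dimensional
Weil–Deligne module `(W, F, N)` over a field `k`, with `q ≠ 0` and
`N ∘ F = q • (F ∘ N)`, the cohomology of `C(W, F, N, q)` is dual to that of
`C(W*, q·Fᵗ, Nᵗ, q⁻¹)`: `dim Hⁱ(C(W,F,N,q)) = dim H^{2-i}(C(W*, q·Fᵗ, Nᵗ, q⁻¹))`
for `i = 0, 1, 2`. -/
theorem stmt6 (k W : Type*) [Field k] [AddCommGroup W] [Module k W]
    [FiniteDimensional k W] (q : k) (hq : q ≠ 0) (F : W ≃ₗ[k] W)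
    (N : W →ₗ[k] W)
    (h : N ∘ₗ (F : W →ₗ[k] W) = q • ((F : W →ₗ[k] W) ∘ₗ N)) :
    finrank k (wdH0 q (F : W →ₗ[k] W) N)
        = finrank k (wdH2 q⁻¹ (q • (F : W →ₗ[k] W).dualMap) N.dualMap) ∧
    finrank k (wdH1 q (F : W →ₗ[k] W) N)
        = finrank k (wdH1 q⁻¹ (q • (F : W →ₗ[k] W).dualMap) N.dualMap) ∧
    finrank k (wdH2 q (F : W →ₗ[k] W) N)
        = finrank k (wdH0 q⁻¹ (q • (F : W →ₗ[k] W).dualMap) N.dualMap) := by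
  have hdim : finrank k (Dual k W) = finrank k W := Subspace.dual_finrank_eq
  have r0 := finrank_range_wdD1_dual hq (F : W →ₗ[k] W) N
  have r1 := finrank_range_wdD0_dual q (F : W →ₗ[k] W) N
  have h0 := finrank_wdH0_add_finrank_range q (F : W →ₗ[k] W) N
  have h0' := finrank_wdH0_add_finrank_range q⁻¹ (q • (F : W →ₗ[k] W).dualMap) N.dualMap
  have h1 := finrank_wdH1_add_finrank_range_add_finrank_range h
  have h1' := finrank_wdH1_add_finrank_range_add_finrank_range (dualMap_comp_smul_dualMap hq h)
  have h2 := finrank_wdH2_add_finrank_range q (F : W →ₗ[k] W) N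
  have h2' := finrank_wdH2_add_finrank_range q⁻¹ (q • (F : W →ₗ[k] W).dualMap) N.dualMap
  omega
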